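/- Let M_0, ..., M_k be n×n strictly diagonally dominant matrices whose s-th diagonal entries have the same sign for each s, and let D_0, ..., D_k be nonnegative diagonal matrices with entries in [0,1] and Σ D_i = I. Then with S = Σ_{i=0}^k D_i M_i and e the all-ones vector, ⟨S⟩e ≥ (min_{i,j} (⟨M_i⟩e)_j) · e > 0 componentwise. -/

import Mathlib

open Matrix

/-- Strict diagonal dominance. -/
def SDD {n : ℕ} (A : Matrix (Fin n) (Fin n) ℝ) : Prop :=
  ∀ s, ∑ t ∈ Finset.univ.erase s, |A s t| < |A s s|

/-- The comparison matrix `⟨A⟩`. -/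
def cmpMat {n : ℕ} (A : Matrix (Fin n) (Fin n) ℝ) : Matrix (Fin n) (Fin n) ℝ :=
  fun s t => if s = t then |A s s| else -|A s t|

/-!
Row `s` of `S = ∑ i, D i * M i` is the convex combination `∑ i, d i s • (row s of M i)`.
Since the diagonal entries `M i s s` share a sign, nothing cancels on the diagonal and
`|S s s| = ∑ i, d i s * |M i s s|`, while off the diagonal the triangle inequality gives
`|S s t| ≤ ∑ i, d i s * |M i s t|`. Hence `(⟨S⟩e)_s ≥ ∑ i, d i s * (⟨M i⟩e)_s`, a convex combination
of positive numbers, each at least their minimum.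
-/

lemma cmpMat_mulVec_one_apply {n : ℕ} (A : Matrix (Fin n) (Fin n) ℝ) (s : Fin n) :
    (cmpMat A *ᵥ fun _ => (1:ℝ)) s = |A s s| - ∑ t ∈ Finset.univ.erase s, |A s t| := by
  simp only [mulVec, dotProduct, mul_one, cmpMat]
  rw [← Finset.add_sum_erase _ _ (Finset.mem_univ s), if_pos rfl, sub_eq_add_neg,
    ← Finset.sum_neg_distrib]
  exact congrArg _ <| Finset.sum_congr rfl fun t ht => if_neg (Finset.ne_of_mem_erase ht).symm

lemma SDD.cmpMat_mulVec_one_pos {n : ℕ} {A : Matrix (Fin n) (Fin n) ℝ} (hA : SDD A) (s : Fin n) :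
    0 < (cmpMat A *ᵥ fun _ => (1:ℝ)) s := by
  rw [cmpMat_mulVec_one_apply]
  exact sub_pos.2 (hA s)

lemma abs_sum_mul_of_nonneg_of_sameSign {ι : Type*} (s : Finset ι) {w a : ι → ℝ}
    (hw : ∀ i ∈ s, 0 ≤ w i) (ha : (∀ i ∈ s, 0 ≤ a i) ∨ (∀ i ∈ s, a i ≤ 0)) :
    |∑ i ∈ s, w i * a i| = ∑ i ∈ s, w i * |a i| := by
  rcases ha with ha | ha
  · rw [Finset.abs_sum_of_nonneg fun i hi => mul_nonneg (hw i hi) (ha i hi)]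
    exact Finset.sum_congr rfl fun i hi => by rw [abs_of_nonneg (ha i hi)]
  · rw [← abs_neg, ← Finset.sum_neg_distrib,
      Finset.abs_sum_of_nonneg fun i hi => by nlinarith [hw i hi, ha i hi]]
    exact Finset.sum_congr rfl fun i hi => by rw [abs_of_nonpos (ha i hi)]; ring

lemma abs_sum_mul_le_of_nonneg {ι : Type*} (s : Finset ι) {w : ι → ℝ} (a : ι → ℝ)
    (hw : ∀ i ∈ s, 0 ≤ w i) : |∑ i ∈ s, w i * a i| ≤ ∑ i ∈ s, w i * |a i| :=
  (Finset.abs_sum_le_sum_abs _ _).trans_eq <|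
    Finset.sum_congr rfl fun i hi => by rw [abs_mul, abs_of_nonneg (hw i hi)]

lemma sum_diagonal_mul_apply {ι : Type*} [Fintype ι] {n : ℕ}
    (M : ι → Matrix (Fin n) (Fin n) ℝ) (d : ι → Fin n → ℝ) (s t : Fin n) :
    (∑ i, diagonal (d i) * M i) s t = ∑ i, d i s * M i s t := by
  simp only [Matrix.sum_apply, Matrix.diagonal_mul]

lemma sum_mul_cmpMat_mulVec_one_le {ι : Type*} [Fintype ι] {n : ℕ}
    (M : ι → Matrix (Fin n) (Fin n) ℝ) (d : ι → Fin n → ℝ) (s : Fin n) (hd : ∀ i, 0 ≤ d i s)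
    (hsign : (∀ i, 0 ≤ M i s s) ∨ (∀ i, M i s s ≤ 0)) :
    ∑ i, d i s * (cmpMat (M i) *ᵥ fun _ => (1:ℝ)) s ≤
      (cmpMat (∑ i, diagonal (d i) * M i) *ᵥ fun _ => (1:ℝ)) s := by
  have hdiag : |(∑ i, diagonal (d i) * M i) s s| = ∑ i, d i s * |M i s s| := by
    rw [sum_diagonal_mul_apply]
    exact abs_sum_mul_of_nonneg_of_sameSign _ (fun i _ => hd i)
      (hsign.imp (fun h i _ => h i) (fun h i _ => h i))
  have hoff : ∑ t ∈ Finset.univ.erase s, |(∑ i, diagonal (d i) * M i) s t| ≤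
      ∑ t ∈ Finset.univ.erase s, ∑ i, d i s * |M i s t| :=
    Finset.sum_le_sum fun t _ => by
      rw [sum_diagonal_mul_apply]
      exact abs_sum_mul_le_of_nonneg _ _ fun i _ => hd i
  have hrows : ∑ i, d i s * (cmpMat (M i) *ᵥ fun _ => (1:ℝ)) s =
      ∑ i, d i s * |M i s s| - ∑ t ∈ Finset.univ.erase s, ∑ i, d i s * |M i s t| := by
    simp only [cmpMat_mulVec_one_apply, mul_sub, Finset.mul_sum, Finset.sum_sub_distrib]
    rw [Finset.sum_comm (s := Finset.univ)]
  rw [hrows, cmpMat_mulVec_one_apply, hdiag]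
  linarith

theorem stmt_7 (n k : ℕ) (hn : 0 < n) (M : Fin (k+1) → Matrix (Fin n) (Fin n) ℝ)
    (hsdd : ∀ i, SDD (M i))
    (hsign : ∀ s, (∀ i, 0 < M i s s) ∨ (∀ i, M i s s < 0))
    (d : Fin (k+1) → Fin n → ℝ)
    (hd : ∀ i s, d i s ∈ Set.Icc (0:ℝ) 1) (hsum : ∀ s, ∑ i, d i s = 1) :
    haveI : Nonempty (Fin n) := Fin.pos_iff_nonempty.mp hn
    0 < (⨅ p : Fin (k+1) × Fin n, (cmpMat (M p.1) *ᵥ fun _ => (1:ℝ)) p.2) ∧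
      ∀ s, (⨅ p : Fin (k+1) × Fin n, (cmpMat (M p.1) *ᵥ fun _ => (1:ℝ)) p.2) ≤
        (cmpMat (∑ i, Matrix.diagonal (d i) * M i) *ᵥ fun _ => (1:ℝ)) s := by
  have : Nonempty (Fin n) := Fin.pos_iff_nonempty.mp hn
  set f : Fin (k+1) × Fin n → ℝ := fun p => (cmpMat (M p.1) *ᵥ fun _ => (1:ℝ)) p.2
  have hle : ∀ p, ⨅ q, f q ≤ f p := ciInf_le (Set.finite_range f).bddBelow
  obtain ⟨p₀, hp₀⟩ := exists_eq_ciInf_of_finite (f := f)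
  refine ⟨hp₀ ▸ (hsdd p₀.1).cmpMat_mulVec_one_pos p₀.2, fun s => ?_⟩
  calc ⨅ q, f q = ∑ i, d i s * ⨅ q, f q := by rw [← Finset.sum_mul, hsum, one_mul]
    _ ≤ ∑ i, d i s * f (i, s) :=
      Finset.sum_le_sum fun i _ => mul_le_mul_of_nonneg_left (hle (i, s)) (hd i s).1
    _ ≤ _ := sum_mul_cmpMat_mulVec_one_le M d s (fun i => (hd i s).1)
      ((hsign s).imp (fun h i => (h i).le) (fun h i => (h i).le))
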